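/- Two orbit closures of a torus action intersect, closure(O_v) ∩ closure(O_w) ≠ ∅, if and only if O_{ṽ} = O_{w̃}, where ṽ = v|_{esupp(v)} and w̃ = w|_{esupp(w)} are the restrictions to the essential supports. -/

import Mathlib

open scoped BigOperators

noncomputable section

/-- Action of the torus `(ℂˣ)^d` on `ℂ^n` given by the integer weight matrix `M`:
coordinate `j` is scaled by the Laurent monomial `∏ i, (t i) ^ (M i j)`. -/
def torusAct {d n : ℕ} (M : Matrix (Fin d) (Fin n) ℤ) (t : Fin d → ℂˣ) (v : Fin n → ℂ) :
    Fin n → ℂ := fun j => (∏ i, (t i : ℂ) ^ M i j) * v j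

/-- The orbit of `v` under the torus action. -/
def torusOrbit {d n : ℕ} (M : Matrix (Fin d) (Fin n) ℤ) (v : Fin n → ℂ) : Set (Fin n → ℂ) :=
  {w | ∃ t : Fin d → ℂˣ, w = torusAct M t v}

/-- The Newton cone `C(v)`: the convex cone generated by the columns `m⁽ʲ⁾` of `M`
for `j` in the support of `v`. -/
def newtonCone {d n : ℕ} (M : Matrix (Fin d) (Fin n) ℤ) (v : Fin n → ℂ) : Set (Fin d → ℝ) :=
  {y | ∃ c : Fin n → ℝ, (∀ j, 0 ≤ c j) ∧ (∀ j, v j = 0 → c j = 0) ∧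
    y = ∑ j, c j • (fun i => (M i j : ℝ))}

/-- The lineality space `L(v) = C(v) ∩ (-C(v))` of the Newton cone. -/
def lineality {d n : ℕ} (M : Matrix (Fin d) (Fin n) ℤ) (v : Fin n → ℂ) : Set (Fin d → ℝ) :=
  newtonCone M v ∩ -newtonCone M v

/-- The essential support: indices `j` in the support of `v` whose weight column
lies in the lineality space of the Newton cone. -/
def esupp {d n : ℕ} (M : Matrix (Fin d) (Fin n) ℤ) (v : Fin n → ℂ) : Set (Fin n) :=
  {j | v j ≠ 0 ∧ (fun i => (M i j : ℝ)) ∈ lineality M v}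

/-!
If `t_k • v → u`, the coordinates of `u` vanish off the support of `v`, while on `esupp v` they
stay away from zero: there `-m⁽ʲ⁾` is a nonnegative combination of weights of the support, so
`|χ_j(t_k)|` is bounded below. Since the lineality space is a face of the Newton cone, this gives
`esupp u = esupp v`. Every multiplicative relation among the characters `χ_j`, `j ∈ esupp v`,
passes to the limit ratios `u_j / v_j`, and as `ℂˣ` is divisible such ratios are the values of
the characters at some torus point; hence `ũ ∈ O_ṽ`.

Conversely, Hahn–Banach against the convex hull of the inessential weights gives a vector `ℓ`
orthogonal to the lineality space and negative on those weights; the one-parameter subgroup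
`s ↦ exp (s ℓ)` drives `v` to `ṽ`, so `ṽ ∈ closure O_v`, and `closure O_v` is torus-stable.
-/

open Filter Topology
open scoped Matrix

section Character

variable {κ ι G : Type*} [Fintype κ] [CommGroup G]

def character (M : Matrix κ ι ℤ) (t : κ → G) (j : ι) : G := ∏ i, t i ^ M i j

lemma prod_character_zpow [Fintype ι] (M : Matrix κ ι ℤ) (t : κ → G) (a : ι → ℤ) :
    ∏ j, character M t j ^ a j = ∏ i, t i ^ (M *ᵥ a) i := by
  have zpow_sum (x : G) (s : Finset ι) (f : ι → ℤ) : x ^ (∑ j ∈ s, f j) = ∏ j ∈ s, x ^ f j := by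
    induction s using Finset.cons_induction with
    | empty => simp
    | cons j s hj ih => rw [Finset.sum_cons, Finset.prod_cons, zpow_add, ih]
  simp only [character, ← Finset.prod_zpow, ← zpow_mul, Matrix.mulVec, dotProduct, zpow_sum]
  exact Finset.prod_comm

end Character

lemma Module.Baer.exists_comp_eq_of_ker_le {R Q A B : Type*} [Ring R] [AddCommGroup Q]
    [Module R Q] [AddCommGroup A] [Module R A] [AddCommGroup B] [Module R B]
    (hQ : Module.Baer R Q) (φ : A →ₗ[R] B) (ψ : A →ₗ[R] Q) (h : LinearMap.ker φ ≤ LinearMap.ker ψ) :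
    ∃ g : B →ₗ[R] Q, g ∘ₗ φ = ψ := by
  obtain ⟨g, hg⟩ := hQ.extension_property ((LinearMap.ker φ).liftQ φ le_rfl)
    (LinearMap.ker_eq_bot.1 (Submodule.ker_liftQ_eq_bot _ _ _ le_rfl))
    ((LinearMap.ker φ).liftQ ψ h)
  exact ⟨g, LinearMap.ext fun a => LinearMap.congr_fun hg (Submodule.Quotient.mk a)⟩

instance : DivisibleBy (Additive ℂˣ) ℤ :=
  divisibleByOfSMulRightSurj _ _ fun {m} hm z =>
    ⟨Additive.ofMul
        (Units.mk0 (Complex.exp (Complex.log (z.toMul : ℂ) / m)) (Complex.exp_ne_zero _)),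
      Additive.toMul.injective <| Units.ext <| by
        simp [← Complex.exp_int_mul, mul_div_cancel₀ _ (Int.cast_ne_zero.2 hm : (m : ℂ) ≠ 0),
          Complex.exp_log (Additive.toMul z).ne_zero]⟩

lemma exists_character_eq {κ ι : Type*} [Fintype κ] [Fintype ι]
    (M : Matrix κ ι ℤ) (x : ι → ℂˣ) (hx : ∀ a, M *ᵥ a = 0 → ∏ j, x j ^ a j = 1) :
    ∃ t : κ → ℂˣ, ∀ j, character M t j = x j := by
  classical
  let ψ : (ι → ℤ) →ₗ[ℤ] Additive ℂˣ := Fintype.linearCombination ℤ fun j => Additive.ofMul (x j)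
  have hker : LinearMap.ker M.mulVecLin ≤ LinearMap.ker ψ := fun a ha => by
    apply Additive.toMul.injective
    simpa [ψ, Fintype.linearCombination_apply, toMul_sum] using hx a ha
  obtain ⟨g, hg⟩ := (Module.Baer.of_divisible _).exists_comp_eq_of_ker_le M.mulVecLin ψ hker
  refine ⟨fun i => (g fun k => if i = k then 1 else 0).toMul, fun j => ?_⟩
  have hj := LinearMap.congr_fun hg (Pi.single j 1)
  simp only [LinearMap.comp_apply, Matrix.mulVecLin_apply, Matrix.mulVec_single_one, ψ,
    Fintype.linearCombination_apply] at hj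
  rw [pi_eq_sum_univ (M.col j), map_sum] at hj
  simp only [map_smul] at hj
  simpa [character, toMul_sum, Pi.single_apply] using congrArg Additive.toMul hj

section TorusAction

variable {d n : ℕ} {M : Matrix (Fin d) (Fin n) ℤ}

lemma torusAct_apply (t : Fin d → ℂˣ) (v : Fin n → ℂ) (j : Fin n) :
    torusAct M t v j = ((character M t j : ℂˣ) : ℂ) * v j := by
  simp [torusAct, character]

lemma torusAct_mul (t s : Fin d → ℂˣ) (v : Fin n → ℂ) :
    torusAct M t (torusAct M s v) = torusAct M (t * s) v := by
  ext j
  simp only [torusAct_apply, character, Pi.mul_apply, mul_zpow, Finset.prod_mul_distrib]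
  push_cast
  ring

lemma mem_torusOrbit_self (v : Fin n → ℂ) : v ∈ torusOrbit M v :=
  ⟨1, by ext j; simp [torusAct]⟩

lemma torusOrbit_eq_of_mem {u v : Fin n → ℂ} (h : u ∈ torusOrbit M v) :
    torusOrbit M u = torusOrbit M v := by
  obtain ⟨t, rfl⟩ := h
  ext w
  constructor
  · rintro ⟨s, rfl⟩
    exact ⟨s * t, by rw [torusAct_mul]⟩
  · rintro ⟨s, rfl⟩
    exact ⟨s * t⁻¹, by rw [torusAct_mul, inv_mul_cancel_right]⟩

lemma torusAct_mem_closure_torusOrbit {u v : Fin n → ℂ} (t : Fin d → ℂˣ)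
    (hu : u ∈ closure (torusOrbit M v)) : torusAct M t u ∈ closure (torusOrbit M v) := by
  have hcont : Continuous (torusAct M t) :=
    continuous_pi fun j => continuous_const.mul (continuous_apply j)
  refine closure_mono ?_ (image_closure_subset_closure_image hcont ⟨u, hu, rfl⟩)
  rintro _ ⟨_, ⟨s, rfl⟩, rfl⟩
  exact ⟨t * s, torusAct_mul t s v⟩

end TorusAction

lemma PointedCone.mem_lineal_of_sum_mem_lineal {R E ι : Type*} [DivisionRing R] [LinearOrder R]
    [IsOrderedRing R] [AddCommGroup E] [Module R E] {C : PointedCone R E} {s : Finset ι}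
    {z : ι → E} (hz : ∀ i ∈ s, z i ∈ C) (hsum : ∑ i ∈ s, z i ∈ C.lineal) {i : ι} (hi : i ∈ s) :
    z i ∈ C.lineal := by
  classical
  rw [← Finset.add_sum_erase s z hi] at hsum
  exact (PointedCone.IsFaceOf.lineal C).mem_of_add_mem_left (hz i hi)
    (C.sum_mem fun k hk => hz k (Finset.mem_of_mem_erase hk)) hsum

section NewtonCone

variable {d n : ℕ} {M : Matrix (Fin d) (Fin n) ℤ}

variable (M) in
def weight (j : Fin n) : Fin d → ℝ := fun i => M i j

variable (M) in
def newtonPointedCone (v : Fin n → ℂ) : PointedCone ℝ (Fin d → ℝ) where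
  carrier := newtonCone M v
  zero_mem' := ⟨0, fun _ => le_rfl, fun _ _ => rfl, by simp⟩
  add_mem' := by
    rintro _ _ ⟨c, hc, hcv, rfl⟩ ⟨e, he, hev, rfl⟩
    refine ⟨c + e, fun j => add_nonneg (hc j) (he j), fun j hj => by simp [hcv j hj, hev j hj], ?_⟩
    simp [add_smul, Finset.sum_add_distrib]
  smul_mem' := by
    rintro ⟨r, hr⟩ _ ⟨c, hc, hcv, rfl⟩
    refine ⟨r • c, fun j => mul_nonneg hr (hc j), fun j hj => by simp [hcv j hj], ?_⟩
    simp [Finset.smul_sum, smul_smul]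

lemma mem_esupp_iff {v : Fin n → ℂ} {j : Fin n} :
    j ∈ esupp M v ↔ v j ≠ 0 ∧ weight M j ∈ (newtonPointedCone M v).lineal :=
  Iff.rfl

lemma smul_weight_mem_newtonPointedCone {v : Fin n → ℂ} {j : Fin n} {c : ℝ} (hc : 0 ≤ c)
    (hcv : v j = 0 → c = 0) : c • weight M j ∈ newtonPointedCone M v := by
  classical
  refine ⟨Pi.single j c, fun l => ?_, fun l hl => ?_, ?_⟩
  · rcases eq_or_ne l j with rfl | h <;> simp [*]
  · rcases eq_or_ne l j with rfl | h <;> simp [*]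
  · simp [Pi.single_apply]; rfl

lemma weight_mem_newtonPointedCone {v : Fin n → ℂ} {j : Fin n} (hj : v j ≠ 0) :
    weight M j ∈ newtonPointedCone M v := by
  simpa using smul_weight_mem_newtonPointedCone (M := M) zero_le_one (absurd · hj)

lemma newtonPointedCone_mono {u v : Fin n → ℂ} (h : ∀ j, v j = 0 → u j = 0) :
    newtonPointedCone M u ≤ newtonPointedCone M v := by
  rintro _ ⟨c, hc, hcu, rfl⟩
  exact ⟨c, hc, fun j hj => hcu j (h j hj), rfl⟩

lemma mem_esupp_of_smul_weight_mem_lineal {v : Fin n → ℂ} {j : Fin n} {c : ℝ} (hc : c ≠ 0)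
    (hcv : v j = 0 → c = 0) (h : c • weight M j ∈ (newtonPointedCone M v).lineal) :
    j ∈ esupp M v :=
  ⟨fun hvj => hc (hcv hvj), (Submodule.smul_mem_iff _ hc).1 h⟩

lemma exists_dotProduct_le_of_mem_newtonCone {v : Fin n → ℂ} {y : Fin d → ℝ}
    (hy : y ∈ newtonCone M v) (B : Fin n → ℝ) :
    ∃ K, ∀ ℓ : Fin d → ℝ, (∀ j, v j ≠ 0 → weight M j ⬝ᵥ ℓ ≤ B j) → y ⬝ᵥ ℓ ≤ K := by
  obtain ⟨c, hc, hcv, rfl⟩ := hy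
  refine ⟨∑ j, c j * B j, fun ℓ hℓ => ?_⟩
  rw [sum_dotProduct]
  refine Finset.sum_le_sum fun j _ => ?_
  rw [smul_dotProduct, smul_eq_mul]
  by_cases hvj : v j = 0
  · simp [hcv j hvj]
  · exact mul_le_mul_of_nonneg_left (hℓ j hvj) (hc j)

end NewtonCone

section OrbitClosure

variable {d n : ℕ} {M : Matrix (Fin d) (Fin n) ℤ}

def expCocharacter (ℓ : Fin d → ℝ) (s : ℝ) : Fin d → ℂˣ :=
  fun i => Units.mk0 (Complex.exp (s * ℓ i : ℝ)) (Complex.exp_ne_zero _)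

lemma character_expCocharacter (ℓ : Fin d → ℝ) (s : ℝ) (j : Fin n) :
    ((character M (expCocharacter ℓ s) j : ℂˣ) : ℂ) = Real.exp (s * (weight M j ⬝ᵥ ℓ)) := by
  simp only [character, expCocharacter, Units.coe_prod, Units.val_zpow_eq_zpow_val,
    Units.val_mk0, ← Complex.exp_int_mul, ← Complex.exp_sum, Complex.ofReal_exp]
  congr 1
  simp only [dotProduct, weight, Finset.mul_sum]
  push_cast
  exact Finset.sum_congr rfl fun i _ => by ring

lemma indicator_mem_closure_torusOrbit {v : Fin n → ℂ} (ℓ : Fin d → ℝ)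
    (hℓ : ∀ j, v j ≠ 0 → weight M j ⬝ᵥ ℓ ≤ 0) :
    {j | weight M j ⬝ᵥ ℓ = 0}.indicator v ∈ closure (torusOrbit M v) := by
  refine mem_closure_of_tendsto (f := fun s => torusAct M (expCocharacter ℓ s) v) (b := atTop)
    (tendsto_pi_nhds.2 fun j => ?_) (Eventually.of_forall fun s => ⟨_, rfl⟩)
  simp only [torusAct_apply, character_expCocharacter]
  by_cases h0 : weight M j ⬝ᵥ ℓ = 0
  · simp [h0]
  rw [Set.indicator_of_notMem (show j ∉ {j | weight M j ⬝ᵥ ℓ = 0} from h0)]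
  by_cases hvj : v j = 0
  · simp [hvj]
  have hexp : Tendsto (fun s : ℝ => Real.exp (s * (weight M j ⬝ᵥ ℓ))) atTop (𝓝 0) :=
    Real.tendsto_exp_atBot.comp (tendsto_id.atTop_mul_const_of_neg ((hℓ j hvj).lt_of_ne h0))
  simpa using ((Complex.continuous_ofReal.tendsto 0).comp hexp).mul_const (v j)

lemma exists_dotProduct_weight_eq_zero_and_neg (v : Fin n → ℂ) :
    ∃ ℓ : Fin d → ℝ, (∀ j ∈ esupp M v, weight M j ⬝ᵥ ℓ = 0) ∧
      ∀ j, v j ≠ 0 → j ∉ esupp M v → weight M j ⬝ᵥ ℓ < 0 := by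
  classical
  set L := (newtonPointedCone M v).lineal
  set K := convexHull ℝ (weight M '' {j | v j ≠ 0 ∧ j ∉ esupp M v})
  have hdisj : Disjoint K L := by
    refine Set.disjoint_left.2 fun x hxK hxL => ?_
    obtain ⟨ι, _, c, z, hc, hc1, hz, rfl⟩ := mem_convexHull_iff_exists_fintype.1 hxK
    obtain ⟨i, -, hci⟩ := Finset.exists_ne_zero_of_sum_ne_zero (hc1 ▸ one_ne_zero)
    have hterm : ∀ k ∈ Finset.univ, c k • z k ∈ newtonPointedCone M v := fun k _ => by
      obtain ⟨l, ⟨hvl, -⟩, hl⟩ := hz k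
      exact hl ▸ smul_weight_mem_newtonPointedCone (hc k) (absurd · hvl)
    obtain ⟨j, ⟨hvj, hj⟩, hji⟩ := hz i
    have hi := PointedCone.mem_lineal_of_sum_mem_lineal hterm hxL (Finset.mem_univ i)
    rw [← hji] at hi
    exact hj (mem_esupp_of_smul_weight_mem_lineal hci (absurd · hvj) hi)
  obtain ⟨f, a, b, hfK, hab, hfL⟩ := geometric_hahn_banach_compact_closed (convex_convexHull ℝ _)
    (((Set.toFinite _).image _).isCompact_convexHull (𝕜 := ℝ)) L.convex
    (Submodule.closed_of_finiteDimensional L) hdisj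
  -- a linear functional bounded below on a subspace vanishes on it
  have hfL0 : ∀ x ∈ L, f x = 0 := fun x hx => by
    by_contra hfx
    have := hfL (((b - 1) / f x) • x) (L.smul_mem _ hx)
    rw [map_smul, smul_eq_mul, div_mul_cancel₀ _ hfx] at this
    linarith
  have hb : b < 0 := by simpa using hfL 0 L.zero_mem
  set ℓ : Fin d → ℝ := fun i => f (fun k => if i = k then 1 else 0)
  have hfℓ : ∀ x, f x = x ⬝ᵥ ℓ := fun x =>
    LinearMap.pi_apply_eq_sum_univ f.toLinearMap x
  refine ⟨ℓ, fun j hj => ?_, fun j hvj hj => ?_⟩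
  · rw [← hfℓ]
    exact hfL0 _ hj.2
  · rw [← hfℓ]
    linarith [hfK _ (subset_convexHull ℝ _ ⟨j, ⟨hvj, hj⟩, rfl⟩)]

lemma esupp_indicator_mem_closure_torusOrbit (v : Fin n → ℂ) :
    (esupp M v).indicator v ∈ closure (torusOrbit M v) := by
  classical
  obtain ⟨ℓ, hzero, hneg⟩ := exists_dotProduct_weight_eq_zero_and_neg (M := M) v
  have hℓ : ∀ j, v j ≠ 0 → (weight M j ⬝ᵥ ℓ = 0 ↔ j ∈ esupp M v) := fun j hvj =>
    ⟨fun h => by_contra fun hj => (hneg j hvj hj).ne h, hzero j⟩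
  convert indicator_mem_closure_torusOrbit ℓ fun j hvj => ?_ using 1
  · ext j
    by_cases hvj : v j = 0
    · simp [Set.indicator_apply, hvj]
    · simp [Set.indicator_apply, hℓ j hvj]
  · by_cases hj : j ∈ esupp M v
    · exact (hzero j hj).le
    · exact (hneg j hvj hj).le

end OrbitClosure

section OrbitClosureLimits

variable {d n : ℕ} {M : Matrix (Fin d) (Fin n) ℤ} {u v : Fin n → ℂ}

lemma apply_eq_zero_of_mem_closure_torusOrbit (hu : u ∈ closure (torusOrbit M v)) {j : Fin n}
    (hvj : v j = 0) : u j = 0 := by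
  refine closure_minimal (fun w hw => ?_) (isClosed_eq (continuous_apply j) continuous_const) hu
  obtain ⟨t, rfl⟩ := hw
  simp [torusAct_apply, hvj]

lemma exists_tendsto_torusAct_of_mem_closure (hu : u ∈ closure (torusOrbit M v)) :
    ∃ t : ℕ → Fin d → ℂˣ, Tendsto (fun k => torusAct M (t k) v) atTop (𝓝 u) := by
  obtain ⟨w, hw, hlim⟩ := mem_closure_iff_seq_limit.1 hu
  choose t ht using hw
  exact ⟨t, hlim.congr ht⟩

lemma norm_character (t : Fin d → ℂˣ) (j : Fin n) :
    ‖((character M t j : ℂˣ) : ℂ)‖ = Real.exp (weight M j ⬝ᵥ fun i => Real.log ‖(t i : ℂ)‖) := by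
  simp only [character, Units.coe_prod, Units.val_zpow_eq_zpow_val, norm_prod, norm_zpow,
    dotProduct, weight, Real.exp_sum]
  refine Finset.prod_congr rfl fun i _ => ?_
  rw [mul_comm, ← Real.rpow_def_of_pos (norm_pos_iff.2 (t i).ne_zero), Real.rpow_intCast]

lemma apply_ne_zero_of_mem_closure_torusOrbit (hu : u ∈ closure (torusOrbit M v)) {j : Fin n}
    (hj : j ∈ esupp M v) : u j ≠ 0 := by
  obtain ⟨t, ht⟩ := exists_tendsto_torusAct_of_mem_closure hu
  set ℓ : ℕ → Fin d → ℝ := fun k i => Real.log ‖(t k i : ℂ)‖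
  have hnorm : ∀ k m, ‖torusAct M (t k) v m‖ = Real.exp (weight M m ⬝ᵥ ℓ k) * ‖v m‖ :=
    fun k m => by rw [torusAct_apply, norm_mul, norm_character]
  have hlim : ∀ m, Tendsto (fun k => ‖torusAct M (t k) v m‖) atTop (𝓝 ‖u m‖) :=
    fun m => (((continuous_apply m).tendsto u).comp ht).norm
  set B : Fin n → ℝ := fun m => Real.log ((‖u m‖ + 1) / ‖v m‖)
  have hB : ∀ᶠ k in atTop, ∀ m, v m ≠ 0 → weight M m ⬝ᵥ ℓ k ≤ B m := by
    refine eventually_all.2 fun m => ?_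
    filter_upwards [(hlim m).eventually (gt_mem_nhds (lt_add_one _))] with k hk hvm
    rw [Real.le_log_iff_exp_le (by positivity), le_div_iff₀ (norm_pos_iff.2 hvm), ← hnorm]
    exact hk.le
  obtain ⟨K, hK⟩ := exists_dotProduct_le_of_mem_newtonCone (y := -weight M j) hj.2.2 B
  have hlow : Real.exp (-K) * ‖v j‖ ≤ ‖u j‖ := by
    refine ge_of_tendsto (hlim j) (hB.mono fun k hk => ?_)
    rw [hnorm]
    have := hK (ℓ k) hk
    rw [neg_dotProduct] at this
    gcongr
    linarith
  intro huj
  rw [huj, norm_zero] at hlow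
  linarith [mul_pos (Real.exp_pos (-K)) (norm_pos_iff.2 hj.1)]

lemma esupp_eq_of_mem_closure_torusOrbit (hu : u ∈ closure (torusOrbit M v)) :
    esupp M u = esupp M v := by
  have hsupp : ∀ j, v j = 0 → u j = 0 := fun j => apply_eq_zero_of_mem_closure_torusOrbit hu
  ext j
  constructor
  · rintro ⟨huj, hj, hj'⟩
    exact ⟨fun hvj => huj (hsupp j hvj), newtonPointedCone_mono hsupp hj,
      newtonPointedCone_mono hsupp hj'⟩
  · intro hj
    have huj := apply_ne_zero_of_mem_closure_torusOrbit hu hj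
    obtain ⟨c, hc, hcv, hsum⟩ := hj.2.2
    refine ⟨huj, weight_mem_newtonPointedCone huj, c, hc, fun l hul => ?_, hsum⟩
    by_contra hcl
    have hterm : ∀ l ∈ Finset.univ, c l • weight M l ∈ newtonPointedCone M v :=
      fun l _ => smul_weight_mem_newtonPointedCone (hc l) (hcv l)
    have hlin : ∑ l, c l • weight M l ∈ (newtonPointedCone M v).lineal :=
      hsum ▸ neg_mem (mem_esupp_iff.1 hj).2
    exact apply_ne_zero_of_mem_closure_torusOrbit hu (mem_esupp_of_smul_weight_mem_lineal hcl
      (hcv l) (PointedCone.mem_lineal_of_sum_mem_lineal hterm hlin (Finset.mem_univ l))) hul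

lemma prod_div_zpow_eq_one_of_mem_closure_torusOrbit {ι : Type*} [Fintype ι] (e : ι → Fin n)
    (hu : u ∈ closure (torusOrbit M v)) (hu0 : ∀ j, u (e j) ≠ 0) (hv0 : ∀ j, v (e j) ≠ 0)
    {a : ι → ℤ} (ha : M.submatrix id e *ᵥ a = 0) : ∏ j, (u (e j) / v (e j)) ^ a j = 1 := by
  obtain ⟨t, ht⟩ := exists_tendsto_torusAct_of_mem_closure hu
  have hlim : Tendsto (fun k => ∏ j, (torusAct M (t k) v (e j) / v (e j)) ^ a j) atTop
      (𝓝 (∏ j, (u (e j) / v (e j)) ^ a j)) :=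
    tendsto_finsetProd _ fun j _ => ((((continuous_apply (e j)).tendsto u).comp ht).div_const
      _).zpow₀ _ (Or.inl (div_ne_zero (hu0 j) (hv0 j)))
  have hone : ∀ k, ∏ j, (torusAct M (t k) v (e j) / v (e j)) ^ a j = 1 := fun k => by
    have := congrArg Units.val (prod_character_zpow (M.submatrix id e) (t k) a)
    simp only [ha, Pi.zero_apply, zpow_zero, Finset.prod_const_one, Units.coe_prod,
      Units.val_zpow_eq_zpow_val, Units.val_one] at this
    simp only [torusAct_apply, mul_div_cancel_right₀ _ (hv0 _)]
    exact this
  simp only [hone] at hlim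
  exact tendsto_nhds_unique hlim tendsto_const_nhds

end OrbitClosureLimits

lemma esupp_indicator_mem_torusOrbit_of_mem_closure {d n : ℕ} {M : Matrix (Fin d) (Fin n) ℤ}
    {u v : Fin n → ℂ} (hu : u ∈ closure (torusOrbit M v)) :
    (esupp M u).indicator u ∈ torusOrbit M ((esupp M v).indicator v) := by
  classical
  have hu0 : ∀ j : esupp M v, u j ≠ 0 := fun j => apply_ne_zero_of_mem_closure_torusOrbit hu j.2
  have hv0 : ∀ j : esupp M v, v j ≠ 0 := fun j => j.2.1
  obtain ⟨t, ht⟩ := exists_character_eq (M.submatrix id ((↑) : esupp M v → Fin n))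
    (fun j => Units.mk0 (u j / v j) (div_ne_zero (hu0 j) (hv0 j))) fun a ha => Units.ext <| by
      simpa using prod_div_zpow_eq_one_of_mem_closure_torusOrbit _ hu hu0 hv0 ha
  refine ⟨t, funext fun j => ?_⟩
  rw [esupp_eq_of_mem_closure_torusOrbit hu, torusAct_apply]
  by_cases hj : j ∈ esupp M v
  · have htj : ((character M t j : ℂˣ) : ℂ) = u j / v j := congrArg Units.val (ht ⟨j, hj⟩)
    rw [Set.indicator_of_mem hj, Set.indicator_of_mem hj, htj, div_mul_cancel₀ _ (hv0 ⟨j, hj⟩)]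
  · rw [Set.indicator_of_notMem hj, Set.indicator_of_notMem hj, mul_zero]

/-- Two orbit closures intersect iff the orbits of the restrictions `ṽ = v|_{esupp v}` and
`w̃ = w|_{esupp w}` to the essential supports coincide. -/
theorem orbit_closures_intersect_iff {d n : ℕ} (M : Matrix (Fin d) (Fin n) ℤ)
    (v w : Fin n → ℂ) :
    (closure (torusOrbit M v) ∩ closure (torusOrbit M w)).Nonempty ↔
      torusOrbit M ((esupp M v).indicator v) = torusOrbit M ((esupp M w).indicator w) := by
  constructor
  · rintro ⟨u, huv, huw⟩
    rw [← torusOrbit_eq_of_mem (esupp_indicator_mem_torusOrbit_of_mem_closure huv),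
      ← torusOrbit_eq_of_mem (esupp_indicator_mem_torusOrbit_of_mem_closure huw)]
  · intro h
    obtain ⟨t, ht⟩ : (esupp M v).indicator v ∈ torusOrbit M ((esupp M w).indicator w) :=
      h ▸ mem_torusOrbit_self _
    refine ⟨_, esupp_indicator_mem_closure_torusOrbit v, ?_⟩
    rw [ht]
    exact torusAct_mem_closure_torusOrbit t (esupp_indicator_mem_closure_torusOrbit w)
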